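/- Assume the atom poset A has a bottom element ⊥. Then any two composite games H, K over A have a least upper bound with respect to ≤; explicitly, G = ⟨ H^L's and K^L's | ⟨H, K | ⊥⟩ ⟩ (the game whose left options are all left options of H together with all left options of K, and whose only right option is ⟨H,K|⊥⟩) satisfies H ≤ G, K ≤ G, and G ≤ M for every game M with H ≤ M and K ≤ M. -/
import Mathlib


inductive Game (A : Type) : Type 1 where
  | atom : A → Game A
  | comp : (ι κ : Type) → (ι → Game A) → (κ → Game A) → Nonempty ι → Nonempty κ → Game A

namespace Game

variable {A : Type}

/-- `G.IsAtom` holds iff `G` is an atomic game. -/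
def IsAtom : Game A → Prop
  | atom _ => True
  | comp _ _ _ _ _ _ => False

/-- `G.IsLeftOption x`: `x` is a left option of `G`. -/
def IsLeftOption : Game A → Game A → Prop
  | atom _, _ => False
  | comp _ _ L _ _ _, x => ∃ i, L i = x

/-- `G.IsRightOption y`: `y` is a right option of `G`. -/
def IsRightOption : Game A → Game A → Prop
  | atom _, _ => False
  | comp _ _ _ R _ _, x => ∃ j, R j = x

section Ord

variable [PartialOrder A]

mutual
  /-- The order relation `G ≤ H` on games over a poset. -/
  inductive Le : Game A → Game A → Prop
    | mk : ∀ {G H : Game A},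
        (∀ x, G.IsLeftOption x → Tri x H) →
        (∀ y, H.IsRightOption y → Tri G y) →
        ((G.IsAtom ∨ H.IsAtom) → Tri G H) →
        Le G H
  /-- The relation `G ◁ H` on games over a poset. -/
  inductive Tri : Game A → Game A → Prop
    | ofRight : ∀ {G H y : Game A}, G.IsRightOption y → Le y H → Tri G H
    | ofLeft : ∀ {G H x : Game A}, H.IsLeftOption x → Le G x → Tri G H
    | ofAtom : ∀ {a b : A}, a ≤ b → Tri (Game.atom a) (Game.atom b)
end

/-- Equivalence of games: `G ≤ H` and `H ≤ G`. -/
def Equiv (G H : Game A) : Prop := Le G H ∧ Le H G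

/-- A game is monotone if all of its options are good, and recursively all
options are monotone. -/
inductive Monotone : Game A → Prop
  | mk : ∀ {G : Game A},
      (∀ x, G.IsLeftOption x → Le G x) →
      (∀ y, G.IsRightOption y → Le y G) →
      (∀ x, G.IsLeftOption x → Monotone x) →
      (∀ y, G.IsRightOption y → Monotone y) →
      Monotone G

/-- A game is passable if `G ◁ G` and recursively all options are passable. -/
inductive Passable : Game A → Prop
  | mk : ∀ {G : Game A}, Tri G G →
      (∀ x, G.IsLeftOption x → Passable x) →
      (∀ y, G.IsRightOption y → Passable y) →
      Passable G

end Ord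

end Game

namespace Game

variable {A : Type} [PartialOrder A]

/-- `Le` is reflexive. -/
lemma le_refl' : ∀ G : Game A, Le G G := by
  intro G
  induction G with
  | atom a =>
      exact Le.mk (fun x h => h.elim) (fun y h => h.elim)
        (fun _ => Tri.ofAtom le_rfl)
  | comp ι κ L R hι hκ ihL ihR =>
      refine Le.mk (fun x hx => ?_) (fun y hy => ?_) (fun h => ?_)
      · obtain ⟨i, rfl⟩ := hx
        exact Tri.ofLeft ⟨i, rfl⟩ (ihL i)
      · obtain ⟨j, rfl⟩ := hy
        exact Tri.ofRight ⟨j, rfl⟩ (ihR j)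
      · exact absurd h (by simp [IsAtom])

lemma bot_le' [OrderBot A] : ∀ G : Game A, Le (Game.atom ⊥) G ∧ Tri (Game.atom ⊥) G := by
  intro G
  induction G with
  | atom a =>
      refine ⟨Le.mk (fun x h => h.elim) (fun y h => h.elim)
        (fun _ => Tri.ofAtom bot_le), Tri.ofAtom bot_le⟩
  | comp ι κ L R hι hκ ihL ihR =>
      obtain ⟨i⟩ := id hι
      have htri : Tri (Game.atom ⊥) (Game.comp ι κ L R hι hκ) :=
        Tri.ofLeft ⟨i, rfl⟩ (ihL i).1
      refine ⟨Le.mk (fun x h => h.elim) (fun y hy => ?_) (fun _ => htri), htri⟩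
      obtain ⟨j, rfl⟩ := hy
      exact (ihR j).2

end Game

/-- If the atom poset has a bottom element, then any two composite games
`H`, `K` have a least upper bound, namely
`G = ⟨ H^L's and K^L's | ⟨H, K | ⊥⟩ ⟩`. -/
theorem Game.lub {A : Type} [PartialOrder A] [OrderBot A]
    (ι₁ κ₁ ι₂ κ₂ : Type) (L₁ : ι₁ → Game A) (R₁ : κ₁ → Game A)
    (L₂ : ι₂ → Game A) (R₂ : κ₂ → Game A)
    (hι₁ : Nonempty ι₁) (hκ₁ : Nonempty κ₁) (hι₂ : Nonempty ι₂) (hκ₂ : Nonempty κ₂) :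
    let H := Game.comp ι₁ κ₁ L₁ R₁ hι₁ hκ₁
    let K := Game.comp ι₂ κ₂ L₂ R₂ hι₂ hκ₂
    let HKbot := Game.comp Bool Unit (fun b => cond b H K)
      (fun _ => Game.atom ⊥) ⟨true⟩ ⟨()⟩
    let G := Game.comp (ι₁ ⊕ ι₂) Unit (Sum.elim L₁ L₂) (fun _ => HKbot)
      (hι₁.map Sum.inl) ⟨()⟩
    Game.Le H G ∧ Game.Le K G ∧
      ∀ M : Game A, Game.Le H M → Game.Le K M → Game.Le G M := by
  intro H K HKbot G
  -- Key lemma: if `Tri H y` and `Tri K y` then `Le HKbot y`.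
  have hk_le : ∀ y : Game A, Game.Tri H y → Game.Tri K y → Game.Le HKbot y := by
    intro y hH hK
    refine Game.Le.mk (fun x hx => ?_) (fun y' hy' => ?_) (fun _ => ?_)
    · obtain ⟨b, rfl⟩ := hx
      cases b
      · exact hK
      · exact hH
    · exact Game.Tri.ofRight ⟨(), rfl⟩ (Game.bot_le' y').1
    · exact Game.Tri.ofRight ⟨(), rfl⟩ (Game.bot_le' y).1
  refine ⟨?_, ?_, ?_⟩
  · -- H ≤ G
    refine Game.Le.mk (fun x hx => ?_) (fun y hy => ?_) (fun h => ?_)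
    · obtain ⟨i, rfl⟩ := hx
      exact Game.Tri.ofLeft ⟨Sum.inl i, rfl⟩ (Game.le_refl' _)
    · obtain ⟨j, rfl⟩ := hy
      exact Game.Tri.ofLeft ⟨true, rfl⟩ (Game.le_refl' _)
    · exact absurd h (by simp [H, G, Game.IsAtom])
  · -- K ≤ G
    refine Game.Le.mk (fun x hx => ?_) (fun y hy => ?_) (fun h => ?_)
    · obtain ⟨i, rfl⟩ := hx
      exact Game.Tri.ofLeft ⟨Sum.inr i, rfl⟩ (Game.le_refl' _)
    · obtain ⟨j, rfl⟩ := hy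
      exact Game.Tri.ofLeft ⟨false, rfl⟩ (Game.le_refl' _)
    · exact absurd h (by simp [K, G, Game.IsAtom])
  · -- G is least
    intro M hHM hKM
    obtain ⟨hHL, hHR, hHA⟩ := hHM
    obtain ⟨hKL, hKR, hKA⟩ := hKM
    refine Game.Le.mk (fun x hx => ?_) (fun y hy => ?_) (fun h => ?_)
    · obtain ⟨i, rfl⟩ := hx
      cases i with
      | inl i => exact hHL _ ⟨i, rfl⟩
      | inr i => exact hKL _ ⟨i, rfl⟩
    · exact Game.Tri.ofRight ⟨(), rfl⟩ (hk_le _ (hHR _ hy) (hKR _ hy))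
    · have hM : M.IsAtom := h.resolve_left (by simp [G, Game.IsAtom])
      exact Game.Tri.ofRight ⟨(), rfl⟩
        (hk_le M (hHA (Or.inr hM)) (hKA (Or.inr hM)))
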